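/- If x, y ∈ D_I^δ with ‖x_i - y_i‖ < α for all i and α < δ/(2|I|), then the Lebesgue measure of the set of ω ∈ [0,1]^d whose Voronoi index differs between x and y (i.e., C_x^{-1}(ω) ≠ C_y^{-1}(ω)) is at most |I|·(|I|-1)·(4α/δ + α)·(√2)^{d-1}. -/

import Mathlib

open MeasureTheory Finset

noncomputable section

abbrev Eu (d : ℕ) := EuclideanSpace ℝ (Fin d)

def cube (d : ℕ) : Set (Eu d) := {ω | ∀ i, ω i ∈ Set.Icc (0:ℝ) 1}

def vIndex {d : ℕ} {ι : Type*} [Fintype ι] [LinearOrder ι] [Nonempty ι]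
    (x : ι → Eu d) (ω : Eu d) : ι :=
  (Finset.univ.filter fun i => ∀ j, dist (x i) ω ≤ dist (x j) ω).min' (by
    obtain ⟨i, -, hi⟩ := Finset.exists_min_image Finset.univ
      (fun j => dist (x j) ω) ⟨Classical.arbitrary ι, Finset.mem_univ _⟩
    exact ⟨i, Finset.mem_filter.2 ⟨Finset.mem_univ _,
      fun j => hi j (Finset.mem_univ _)⟩⟩)

def vCell {d : ℕ} {ι : Type*} [Fintype ι] [LinearOrder ι] [Nonempty ι]
    (x : ι → Eu d) (i : ι) : Set (Eu d) :=
  {ω ∈ cube d | vIndex x ω = i}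

def sep {d : ℕ} {ι : Type*} (δ : ℝ) : Set (ι → Eu d) :=
  {x | (∀ i, x i ∈ cube d) ∧ ∀ i j, i ≠ j → δ ≤ dist (x i) (x j)}

def gfun {d : ℕ} {ι : Type*} [Fintype ι] [LinearOrder ι] [Nonempty ι]
    (Λ : ι → ι → ℝ) (x : ι → Eu d) (ω : Eu d) : ℝ :=
  ∑ j, Λ (vIndex x ω) j * ‖x j - ω‖ ^ 2

def extVar {d : ℕ} {ι : Type*} [Fintype ι] [LinearOrder ι] [Nonempty ι]
    (Λ : ι → ι → ℝ) (P : Measure (Eu d)) (x : ι → Eu d) : ℝ :=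
  (1/2) * ∑ i, ∑ j, Λ i j * ∫ ω in vCell x i, ‖x j - ω‖ ^ 2 ∂P

/-! If the nearest centroid of `ω` is `i` for `x` but `j ≠ i` for `y`, then `ω` is at least as
close to `x i` as to `x j`, and by less than `2α` more, since every centroid moves by less than `α`.
Inside the cube, where all distances are at most `√d`, this confines `⟪x i - x j, ω⟫` to an interval
of length `2α√d`. Slicing along a coordinate where `x i - x j` is largest, the part of the unit cube
in such a slab has volume at most `2α√d · √d / ‖x i - x j‖ ≤ 2αd/δ`. Summing over the ordered pairs
`(i, j)` gives `N(N-1) · 2αd/δ`, and `d ≤ 2 √2^(d-1)`. -/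

lemma volume_setOf_mul_mem_Icc {v : ℝ} (hv : v ≠ 0) (a b : ℝ) :
    volume {t : ℝ | t * v ∈ Set.Icc a b} = ENNReal.ofReal ((b - a) / |v|) := by
  change volume ((· * v) ⁻¹' Set.Icc a b) = _
  rw [Real.volume_preimage_mul_right hv, Real.volume_Icc,
    ← ENNReal.ofReal_mul (abs_nonneg _), abs_inv, inv_mul_eq_div]

lemma volume_unitCube_inter_slab_le {n : ℕ} (v : Fin (n + 1) → ℝ) {k : Fin (n + 1)}
    (hk : v k ≠ 0) (a b : ℝ) :
    volume {ω : Fin (n + 1) → ℝ |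
        ω ∈ Set.univ.pi (fun _ => Set.Icc 0 1) ∧ ∑ m, ω m * v m ∈ Set.Icc a b}
      ≤ ENNReal.ofReal ((b - a) / |v k|) := by
  set A := {ω : Fin (n + 1) → ℝ |
    ω ∈ Set.univ.pi (fun _ => Set.Icc 0 1) ∧ ∑ m, ω m * v m ∈ Set.Icc a b}
  have hA : MeasurableSet A :=
    (MeasurableSet.univ_pi fun _ => measurableSet_Icc).inter
      (measurableSet_Icc.preimage (by fun_prop))
  set e := MeasurableEquiv.piFinSuccAbove (fun _ : Fin (n + 1) => ℝ) k
  have he : MeasurePreserving e.symm volume volume :=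
    (volume_preserving_piFinSuccAbove (fun _ : Fin (n + 1) => ℝ) k).symm e
  have hslice : ∀ y : Fin n → ℝ, volume ((fun t => (t, y)) ⁻¹' (e.symm ⁻¹' A)) ≤
      (Set.univ.pi fun _ => Set.Icc (0 : ℝ) 1).indicator
        (fun _ => ENNReal.ofReal ((b - a) / |v k|)) y := by
    intro y
    have hsum : ∀ t, ∑ m, e.symm (t, y) m * v m = t * v k + ∑ i, y i * v (k.succAbove i) := by
      intro t
      rw [Fin.sum_univ_succAbove _ k]
      simp [e, MeasurableEquiv.piFinSuccAbove, Fin.insertNthEquiv]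
    by_cases hy : y ∈ Set.univ.pi fun _ => Set.Icc (0 : ℝ) 1
    · set s := ∑ i, y i * v (k.succAbove i)
      rw [Set.indicator_of_mem hy, ← sub_sub_sub_cancel_right b a s,
        ← volume_setOf_mul_mem_Icc hk]
      refine measure_mono fun t ht => ?_
      obtain ⟨hlow, hup⟩ := hsum t ▸ ht.2
      exact ⟨by linarith, by linarith⟩
    · rw [Set.indicator_of_notMem hy, nonpos_iff_eq_zero, measure_eq_zero_iff_ae_notMem]
      refine Filter.Eventually.of_forall fun t ht => hy fun i _ => ?_
      simpa [e, MeasurableEquiv.piFinSuccAbove, Fin.insertNthEquiv] using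
        ht.1 (k.succAbove i) trivial
  calc volume A = volume (e.symm ⁻¹' A) := (he.measure_preimage_equiv A).symm
    _ = ∫⁻ y, volume ((fun t => (t, y)) ⁻¹' (e.symm ⁻¹' A)) := by
      rw [Measure.volume_eq_prod, Measure.prod_apply_symm (e.symm.measurable hA)]
    _ ≤ ∫⁻ y, (Set.univ.pi fun _ => Set.Icc (0 : ℝ) 1).indicator
          (fun _ => ENNReal.ofReal ((b - a) / |v k|)) y := lintegral_mono hslice
    _ = ENNReal.ofReal ((b - a) / |v k|) := by
      rw [lintegral_indicator_const (MeasurableSet.univ_pi fun _ => measurableSet_Icc),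
        volume_pi_pi]
      simp

lemma EuclideanSpace.norm_le_sqrt_card_mul {ι : Type*} [Fintype ι] (u : EuclideanSpace ℝ ι)
    {c : ℝ} (hc : 0 ≤ c) (hu : ∀ m, |u m| ≤ c) : ‖u‖ ≤ √(Fintype.card ι) * c := by
  calc ‖u‖ = √(∑ m, |u m| ^ 2) := by simp [EuclideanSpace.norm_eq]
    _ ≤ √(∑ _m : ι, c ^ 2) :=
      Real.sqrt_le_sqrt (sum_le_sum fun m _ => pow_le_pow_left₀ (abs_nonneg _) (hu m) 2)
    _ = √(Fintype.card ι) * c := by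
      rw [sum_const, card_univ, nsmul_eq_mul, Real.sqrt_mul (Nat.cast_nonneg _),
        Real.sqrt_sq hc]

section

variable {d : ℕ}

lemma volume_cube_inter_slab_le {u : Eu d} (hu : u ≠ 0) {a b : ℝ} (hab : a ≤ b) :
    volume {ω ∈ cube d | inner ℝ u ω ∈ Set.Icc a b} ≤ ENNReal.ofReal ((b - a) * √d / ‖u‖) := by
  obtain ⟨k₀, hk₀⟩ : ∃ k, u k ≠ 0 := by
    by_contra! h
    exact hu (by ext m; simp [h m])
  obtain ⟨n, rfl⟩ : ∃ n, d = n + 1 := Nat.exists_eq_succ_of_ne_zero k₀.pos.ne'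
  obtain ⟨k, -, hmax⟩ := exists_max_image univ (fun m => |u m|) univ_nonempty
  have hk : 0 < |u k| := (abs_pos.2 hk₀).trans_le (hmax k₀ (mem_univ _))
  have hnorm : ‖u‖ ≤ √(n + 1 : ℕ) * |u k| :=
    by simpa using EuclideanSpace.norm_le_sqrt_card_mul u hk.le fun m => hmax m (mem_univ _)
  have hset : {ω ∈ cube (n + 1) | inner ℝ u ω ∈ Set.Icc a b} =
      (MeasurableEquiv.toLp 2 (Fin (n + 1) → ℝ)).symm ⁻¹'
        {ω | ω ∈ Set.univ.pi (fun _ => Set.Icc 0 1) ∧ ∑ m, ω m * u m ∈ Set.Icc a b} := by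
    ext ω
    simp [cube, EuclideanSpace.inner_eq_star_dotProduct, dotProduct, Pi.le_def, forall_and]
  rw [hset, (EuclideanSpace.volume_preserving_symm_measurableEquiv_toLp _).measure_preimage_equiv]
  refine (volume_unitCube_inter_slab_le (fun m => u m) (abs_pos.1 hk) a b).trans
    (ENNReal.ofReal_le_ofReal ?_)
  rw [div_le_div_iff₀ hk (norm_pos_iff.2 hu)]
  calc (b - a) * ‖u‖ ≤ (b - a) * (√(n + 1 : ℕ) * |u k|) := by gcongr
    _ = (b - a) * √(n + 1 : ℕ) * |u k| := by ring

lemma dist_le_sqrt_of_mem_cube {p q : Eu d} (hp : p ∈ cube d) (hq : q ∈ cube d) :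
    dist p q ≤ √d := by
  refine (dist_eq_norm p q).trans_le
    ((EuclideanSpace.norm_le_sqrt_card_mul _ zero_le_one fun m => ?_).trans_eq (by simp))
  rw [PiLp.sub_apply, abs_sub_le_iff]
  constructor <;> linarith [(hp m).1, (hp m).2, (hq m).1, (hq m).2]

lemma sq_dist_sub_sq_dist (p q ω : Eu d) :
    dist q ω ^ 2 - dist p ω ^ 2 = 2 * inner ℝ (p - q) ω + (‖q‖ ^ 2 - ‖p‖ ^ 2) := by
  rw [dist_eq_norm, dist_eq_norm, norm_sub_sq_real, norm_sub_sq_real, inner_sub_left]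
  ring

def nearBisector (p q : Eu d) (s : ℝ) : Set (Eu d) :=
  {ω ∈ cube d | dist p ω ≤ dist q ω ∧ dist q ω ≤ dist p ω + s}

lemma nearBisector_subset_slab {p q : Eu d} (hp : p ∈ cube d) (hq : q ∈ cube d)
    {s : ℝ} (hs : 0 ≤ s) :
    nearBisector p q s ⊆ {ω ∈ cube d | inner ℝ (p - q) ω ∈
      Set.Icc ((‖p‖ ^ 2 - ‖q‖ ^ 2) / 2) ((‖p‖ ^ 2 - ‖q‖ ^ 2) / 2 + s * √d)} := by
  rintro ω ⟨hω, hpq, hqp⟩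
  have hpω := dist_le_sqrt_of_mem_cube hp hω
  have hqω := dist_le_sqrt_of_mem_cube hq hω
  have hid := sq_dist_sub_sq_dist p q ω
  have hlow : 0 ≤ dist q ω ^ 2 - dist p ω ^ 2 := sub_nonneg.2 (pow_le_pow_left₀ dist_nonneg hpq 2)
  have hup : dist q ω ^ 2 - dist p ω ^ 2 ≤ 2 * (s * √d) := by
    nlinarith [dist_nonneg (x := p) (y := ω), dist_nonneg (x := q) (y := ω)]
  exact ⟨hω, by linarith, by linarith⟩

lemma volume_nearBisector_le {p q : Eu d} (hp : p ∈ cube d) (hq : q ∈ cube d)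
    (hpq : p ≠ q) {s : ℝ} (hs : 0 ≤ s) :
    volume (nearBisector p q s) ≤ ENNReal.ofReal (s * d / dist p q) := by
  refine (measure_mono (nearBisector_subset_slab hp hq hs)).trans ?_
  have hwidth : 0 ≤ s * √d := by positivity
  refine (volume_cube_inter_slab_le (sub_ne_zero.2 hpq) (by linarith)).trans_eq ?_
  rw [add_sub_cancel_left, mul_assoc, Real.mul_self_sqrt (Nat.cast_nonneg _), dist_eq_norm]

variable {ι : Type*} [Fintype ι] [LinearOrder ι] [Nonempty ι]

lemma dist_vIndex_le (x : ι → Eu d) (ω : Eu d) (j : ι) :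
    dist (x (vIndex x ω)) ω ≤ dist (x j) ω := by
  have h := min'_mem (univ.filter fun i => ∀ j, dist (x i) ω ≤ dist (x j) ω)
  exact (mem_filter.1 (h _)).2 j

lemma setOf_vIndex_ne_subset {x y : ι → Eu d} {α : ℝ} (hclose : ∀ i, dist (x i) (y i) < α) :
    {ω ∈ cube d | vIndex x ω ≠ vIndex y ω} ⊆
      ⋃ p ∈ (univ.offDiag : Finset (ι × ι)), nearBisector (x p.1) (x p.2) (2 * α) := by
  rintro ω ⟨hω, hne⟩
  set i := vIndex x ω
  set j := vIndex y ω
  have hi := dist_vIndex_le x ω j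
  have hj := dist_vIndex_le y ω i
  have hxj := dist_triangle (x j) (y j) ω
  have hyi := dist_triangle (y i) (x i) ω
  have hxi := hclose i
  have hyj := hclose j
  rw [dist_comm] at hxi
  refine Set.mem_iUnion₂.2 ⟨(i, j), mem_offDiag.2 ⟨mem_univ _, mem_univ _, hne⟩, hω, hi, ?_⟩
  linarith

lemma volume_setOf_vIndex_ne_le {x y : ι → Eu d} {δ α : ℝ} (hδ : 0 < δ) (hx : x ∈ sep δ)
    (hclose : ∀ i, dist (x i) (y i) < α) :
    volume {ω ∈ cube d | vIndex x ω ≠ vIndex y ω} ≤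
      ENNReal.ofReal (Fintype.card ι * (Fintype.card ι - 1) * (2 * α * d / δ)) := by
  set N := Fintype.card ι
  have hα : 0 ≤ α := dist_nonneg.trans (hclose (Classical.arbitrary ι)).le
  have hpair : ∀ p ∈ (univ.offDiag : Finset (ι × ι)),
      volume (nearBisector (x p.1) (x p.2) (2 * α)) ≤ ENNReal.ofReal (2 * α * d / δ) := by
    intro p hp
    have hsep := hx.2 _ _ (mem_offDiag.1 hp).2.2
    refine (volume_nearBisector_le (hx.1 _) (hx.1 _) (dist_pos.1 (hδ.trans_le hsep))
      (by positivity)).trans (ENNReal.ofReal_le_ofReal ?_)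
    gcongr
  have hcard : ((N * N - N : ℕ) : ℝ) = N * (N - 1) := by
    rw [Nat.cast_sub (Nat.le_mul_self N)]
    push_cast
    ring
  calc volume {ω ∈ cube d | vIndex x ω ≠ vIndex y ω}
      ≤ volume (⋃ p ∈ (univ.offDiag : Finset (ι × ι)), nearBisector (x p.1) (x p.2) (2 * α)) :=
        measure_mono (setOf_vIndex_ne_subset hclose)
    _ ≤ ∑ p ∈ (univ.offDiag : Finset (ι × ι)), volume (nearBisector (x p.1) (x p.2) (2 * α)) :=
        measure_biUnion_finset_le _ _
    _ ≤ ∑ p ∈ (univ.offDiag : Finset (ι × ι)), ENNReal.ofReal (2 * α * d / δ) :=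
        sum_le_sum hpair
    _ = ENNReal.ofReal (N * (N - 1) * (2 * α * d / δ)) := by
        rw [sum_const, offDiag_card, card_univ, nsmul_eq_mul, ← ENNReal.ofReal_natCast,
          ← ENNReal.ofReal_mul (Nat.cast_nonneg _), hcard]

end

lemma natCast_le_two_mul_sqrt_two_pow (d : ℕ) : (d : ℝ) ≤ 2 * √2 ^ (d - 1) := by
  have hsqrt : √2 ^ (2 * ((d - 1) / 2)) = 2 ^ ((d - 1) / 2) := by
    rw [pow_mul, Real.sq_sqrt zero_le_two]
  calc (d : ℝ) ≤ 2 * (((d - 1) / 2 : ℕ) + 1 : ℕ) := by exact_mod_cast (by omega)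
    _ ≤ 2 * 2 ^ ((d - 1) / 2) := by gcongr; exact_mod_cast Nat.lt_two_pow_self
    _ ≤ 2 * √2 ^ (d - 1) := by
      rw [← hsqrt]
      gcongr
      · exact Real.one_le_sqrt.2 one_le_two
      · omega

theorem stmt7_general {d : ℕ} {ι : Type*} [Fintype ι] [LinearOrder ι] [Nonempty ι]
    (δ α : ℝ) (hδ : 0 < δ)
    (x y : ι → Eu d) (hx : x ∈ sep δ)
    (hclose : ∀ i, dist (x i) (y i) < α) :
    volume {ω ∈ cube d | vIndex x ω ≠ vIndex y ω}
      ≤ ENNReal.ofReal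
          (Fintype.card ι * (Fintype.card ι - 1) * (4 * α / δ + α)
            * Real.sqrt 2 ^ (d - 1)) := by
  have hα : 0 ≤ α := dist_nonneg.trans (hclose (Classical.arbitrary ι)).le
  have hN : (0 : ℝ) ≤ Fintype.card ι * (Fintype.card ι - 1) :=
    mul_nonneg (Nat.cast_nonneg _) (sub_nonneg.2 (by exact_mod_cast Fintype.card_pos))
  refine (volume_setOf_vIndex_ne_le hδ hx hclose).trans (ENNReal.ofReal_le_ofReal ?_)
  rw [mul_assoc _ (4 * α / δ + α)]
  gcongr
  calc 2 * α * d / δ ≤ 2 * α * (2 * √2 ^ (d - 1)) / δ := by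
        gcongr
        exact natCast_le_two_mul_sqrt_two_pow d
    _ = 4 * α / δ * √2 ^ (d - 1) := by ring
    _ ≤ (4 * α / δ + α) * √2 ^ (d - 1) := by gcongr; exact le_add_of_nonneg_right hα

theorem stmt7 {d : ℕ} {ι : Type*} [Fintype ι] [LinearOrder ι] [Nonempty ι]
    (δ α : ℝ) (hδ : 0 < δ) (hα : 0 < α)
    (hαcard : α < δ / (2 * Fintype.card ι))
    (x y : ι → Eu d) (hx : x ∈ sep δ) (hy : y ∈ sep δ)
    (hclose : ∀ i, dist (x i) (y i) < α) :
    volume {ω ∈ cube d | vIndex x ω ≠ vIndex y ω}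
      ≤ ENNReal.ofReal
          (Fintype.card ι * (Fintype.card ι - 1) * (4 * α / δ + α)
            * Real.sqrt 2 ^ (d - 1)) :=
  stmt7_general δ α hδ x y hx hclose
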